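/- arXiv:2106.02936 — 6 statements merged into one kernel-verified Lean document; each statement's English description precedes it below -/
import Mathlib

section
/- For every λ > 0 there exists a constant C > 0 (depending only on λ) such that for all b with -1 < b < 1, ∫_{-1}^{1} (1 - b s)^{-λ-1} (1 + s) (1 - s^2)^{λ-1} ds ≤ C / (1 - |b|). -/
/-!
Put `t = 1 - |b|` and `w = 1 - |s|`. Since `1 - b s ≥ 1 - |b| |s| ≥ (t + w) / 2` and
`(1 + s) (1 - s²)^(λ-1) ≤ 2^(λ+1) w^(λ-1)`, the integrand is at most
`2^(2λ+2) w^(λ-1) (t + w)^(-λ-1)`. The kernel `u^(λ-1) (t + u)^(-λ-1)` has the primitive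
`(u / (t + u))^λ / (λ t)`, which vanishes at `0` and stays below `1 / (λ t)`; this is the
source of the factor `1 / (1 - |b|)`.
-/

open MeasureTheory Set intervalIntegral

noncomputable def betaKernel (lam t u : ℝ) : ℝ := u ^ (lam - 1) * (t + u) ^ (-lam - 1)

section BetaKernel

variable {lam t : ℝ}

lemma betaKernel_nonneg {u : ℝ} (ht : 0 ≤ t) (hu : 0 ≤ u) : 0 ≤ betaKernel lam t u := by
  unfold betaKernel; positivity

lemma intervalIntegrable_betaKernel (hlam : 0 < lam) (ht : 0 < t) {a : ℝ} (ha : 0 ≤ a) :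
    IntervalIntegrable (betaKernel lam t) volume 0 a := by
  refine (intervalIntegrable_rpow' (by linarith)).mul_continuousOn ?_
  refine ContinuousOn.rpow_const (by fun_prop) fun u hu => Or.inl ?_
  rw [uIcc_of_le ha] at hu
  linarith [hu.1]

lemma hasDerivAt_betaKernel_primitive (hlam : lam ≠ 0) (ht : 0 < t) {u : ℝ} (hu : 0 < u) :
    HasDerivAt (fun v => (v / (t + v)) ^ lam / (lam * t)) (betaKernel lam t u) u := by
  have htu : 0 < t + u := by linarith
  have hquot : HasDerivAt (fun v => v / (t + v)) (t / (t + u) ^ 2) u := by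
    refine ((hasDerivAt_id' u).div ((hasDerivAt_id' u).const_add t) htu.ne').congr_deriv ?_
    ring
  refine (((Real.hasDerivAt_rpow_const (p := lam) (Or.inl (div_pos hu htu).ne')).comp u
    hquot).div_const (lam * t)).congr_deriv ?_
  rw [betaKernel, Real.div_rpow hu.le htu.le, show -lam - 1 = -(lam - 1) + -2 by ring,
    Real.rpow_add htu, Real.rpow_neg htu.le, Real.rpow_neg htu.le, Real.rpow_two]
  field_simp

lemma integral_betaKernel_le (hlam : 0 < lam) (ht : 0 < t) {a : ℝ} (ha : 0 ≤ a) :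
    ∫ u in 0..a, betaKernel lam t u ≤ 1 / (lam * t) := by
  have hcont : ContinuousOn (fun v => (v / (t + v)) ^ lam / (lam * t)) (Icc 0 a) := by
    refine ContinuousOn.div_const (ContinuousOn.rpow_const ?_ fun _ _ => Or.inr hlam.le) _
    exact continuousOn_id.div (by fun_prop) fun v hv => by linarith [hv.1]
  rw [integral_eq_sub_of_hasDerivAt_of_le ha hcont
    (fun u hu => hasDerivAt_betaKernel_primitive hlam.ne' ht hu.1)
    (intervalIntegrable_betaKernel hlam ht ha)]
  have hfrac : (a / (t + a)) ^ lam ≤ 1 :=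
    Real.rpow_le_one (by positivity) ((div_le_one (by linarith)).2 (by linarith)) hlam.le
  simp only [zero_div, Real.zero_rpow hlam.ne', sub_zero]
  gcongr

lemma betaKernel_one_sub_abs_le (ht : 0 ≤ t) {s : ℝ} (hs : |s| ≤ 1) :
    betaKernel lam t (1 - |s|) ≤ betaKernel lam t (1 - s) + betaKernel lam t (1 + s) := by
  have := abs_le.1 hs
  rcases abs_cases s with ⟨habs, -⟩ | ⟨habs, -⟩ <;> rw [habs]
  · linarith [betaKernel_nonneg (lam := lam) ht (by linarith : 0 ≤ 1 + s)]
  · rw [sub_neg_eq_add]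
    linarith [betaKernel_nonneg (lam := lam) ht (by linarith : 0 ≤ 1 - s)]

end BetaKernel

lemma one_sub_abs_add_one_sub_abs_le {b s : ℝ} (hb : |b| ≤ 1) (hs : |s| ≤ 1) :
    (1 - |b|) + (1 - |s|) ≤ 2 * (1 - b * s) := by
  have hbs : b * s ≤ |b| * |s| := (le_abs_self _).trans (abs_mul b s).le
  nlinarith [abs_nonneg b, abs_nonneg s]

lemma one_sub_mul_rpow_le {lam b s : ℝ} (hlam : -1 ≤ lam) (hb : |b| < 1) (hs : |s| ≤ 1) :
    (1 - b * s) ^ (-lam - 1) ≤ 2 ^ (lam + 1) * ((1 - |b|) + (1 - |s|)) ^ (-lam - 1) := by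
  have hpos : 0 < (1 - |b|) + (1 - |s|) := by linarith
  calc (1 - b * s) ^ (-lam - 1)
      ≤ (((1 - |b|) + (1 - |s|)) / 2) ^ (-lam - 1) :=
        Real.rpow_le_rpow_of_nonpos (by positivity)
          (by linarith [one_sub_abs_add_one_sub_abs_le hb.le hs]) (by linarith)
    _ = 2 ^ (lam + 1) * ((1 - |b|) + (1 - |s|)) ^ (-lam - 1) := by
        rw [Real.div_rpow hpos.le zero_le_two, div_eq_mul_inv, ← Real.rpow_neg zero_le_two,
          neg_sub, sub_neg_eq_add, add_comm 1 lam, mul_comm]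

lemma one_add_mul_one_sub_sq_rpow_le {lam s : ℝ} (hlam : 0 ≤ lam) (hs : |s| ≤ 1) :
    (1 + s) * (1 - s ^ 2) ^ (lam - 1) ≤ 2 ^ (lam + 1) * (1 - |s|) ^ (lam - 1) := by
  have hs' := abs_le.1 hs
  have hw : 0 ≤ 1 - |s| := by linarith
  have hfac : (1 + |s|) ^ (lam - 1) ≤ 2 ^ lam :=
    calc (1 + |s|) ^ (lam - 1) ≤ (1 + |s|) ^ lam :=
          Real.rpow_le_rpow_of_exponent_le (by linarith [abs_nonneg s]) (by linarith)
      _ ≤ 2 ^ lam := Real.rpow_le_rpow (by positivity) (by linarith) hlam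
  calc (1 + s) * (1 - s ^ 2) ^ (lam - 1)
      = (1 + s) * ((1 + |s|) ^ (lam - 1) * (1 - |s|) ^ (lam - 1)) := by
        rw [← Real.mul_rpow (by positivity) hw, ← sq_abs s]; ring_nf
    _ ≤ 2 * (2 ^ lam * (1 - |s|) ^ (lam - 1)) := by gcongr; linarith
    _ = 2 ^ (lam + 1) * (1 - |s|) ^ (lam - 1) := by
        rw [Real.rpow_add_one two_ne_zero]; ring

lemma integrand_nonneg {lam b s : ℝ} (hb : |b| ≤ 1) (hs : |s| ≤ 1) :
    0 ≤ (1 - b * s) ^ (-lam - 1) * (1 + s) * (1 - s ^ 2) ^ (lam - 1) := by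
  have hbs := one_sub_abs_add_one_sub_abs_le hb hs
  have := abs_le.1 hs
  exact mul_nonneg (mul_nonneg (Real.rpow_nonneg (by linarith) _) (by linarith))
    (Real.rpow_nonneg (by nlinarith) _)

lemma integrand_le_betaKernel {lam b s : ℝ} (hlam : 0 ≤ lam) (hb : |b| < 1) (hs : |s| ≤ 1) :
    (1 - b * s) ^ (-lam - 1) * (1 + s) * (1 - s ^ 2) ^ (lam - 1) ≤
      2 ^ (2 * lam + 2) *
        (betaKernel lam (1 - |b|) (1 - s) + betaKernel lam (1 - |b|) (1 + s)) := by
  have ht : 0 ≤ 1 - |b| := by linarith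
  calc (1 - b * s) ^ (-lam - 1) * (1 + s) * (1 - s ^ 2) ^ (lam - 1)
      = (1 - b * s) ^ (-lam - 1) * ((1 + s) * (1 - s ^ 2) ^ (lam - 1)) := by ring
    _ ≤ (2 ^ (lam + 1) * ((1 - |b|) + (1 - |s|)) ^ (-lam - 1)) *
          (2 ^ (lam + 1) * (1 - |s|) ^ (lam - 1)) := by
        have := abs_le.1 hs
        exact mul_le_mul (one_sub_mul_rpow_le (by linarith) hb hs)
          (one_add_mul_one_sub_sq_rpow_le hlam hs)
          (mul_nonneg (by linarith) (Real.rpow_nonneg (by nlinarith) _)) (by positivity)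
    _ = 2 ^ (2 * lam + 2) * betaKernel lam (1 - |b|) (1 - |s|) := by
        rw [betaKernel, show 2 * lam + 2 = (lam + 1) + (lam + 1) by ring,
          Real.rpow_add two_pos (lam + 1) (lam + 1)]
        ring
    _ ≤ _ := by gcongr; exact betaKernel_one_sub_abs_le ht hs

lemma IntervalIntegrable.of_nonneg_of_le_Ioo {f g : ℝ → ℝ} {a b : ℝ} (hab : a ≤ b)
    (hf : AEStronglyMeasurable f (volume.restrict (Ioo a b)))
    (hg : IntervalIntegrable g volume a b) (hf₀ : ∀ x ∈ Ioo a b, 0 ≤ f x)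
    (hfg : ∀ x ∈ Ioo a b, f x ≤ g x) : IntervalIntegrable f volume a b := by
  rw [intervalIntegrable_iff_integrableOn_Ioo_of_le hab] at hg ⊢
  refine hg.mono' hf ((ae_restrict_iff' measurableSet_Ioo).2 (ae_of_all _ fun x hx => ?_))
  rw [Real.norm_of_nonneg (hf₀ x hx)]
  exact hfg x hx

lemma intervalIntegrable_comp_one_sub_add_comp_one_add {h : ℝ → ℝ}
    (hh : IntervalIntegrable h volume 0 2) :
    IntervalIntegrable (fun s => h (1 - s) + h (1 + s)) volume (-1) 1 := by
  have h₁ := hh.comp_sub_left 1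
  have h₂ := hh.comp_add_left 1
  norm_num at h₁ h₂
  exact h₁.symm.add h₂

lemma integral_comp_one_sub_add_comp_one_add {h : ℝ → ℝ}
    (hh : IntervalIntegrable h volume 0 2) :
    ∫ s in (-1 : ℝ)..1, (h (1 - s) + h (1 + s)) = 2 * ∫ u in (0 : ℝ)..2, h u := by
  have h₁ := hh.comp_sub_left 1
  have h₂ := hh.comp_add_left 1
  norm_num at h₁ h₂
  rw [integral_add h₁.symm h₂, integral_comp_sub_left h 1, integral_comp_add_left h 1]
  norm_num
  ring

theorem paley_stmt1 (lam : ℝ) (hlam : 0 < lam) :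
    ∃ C > (0 : ℝ), ∀ b : ℝ, -1 < b → b < 1 →
      ∫ s in (-1 : ℝ)..1, (1 - b * s) ^ (-lam - 1) * (1 + s) * (1 - s ^ 2) ^ (lam - 1)
        ≤ C / (1 - |b|) := by
  refine ⟨2 ^ (2 * lam + 3) / lam, by positivity, fun b hb₁ hb₂ => ?_⟩
  have hb : |b| < 1 := abs_lt.2 ⟨hb₁, hb₂⟩
  have ht : 0 < 1 - |b| := by linarith
  have habs : ∀ s ∈ Ioo (-1 : ℝ) 1, |s| ≤ 1 := fun s hs => abs_le.2 ⟨hs.1.le, hs.2.le⟩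
  have hk := intervalIntegrable_betaKernel hlam ht zero_le_two
  have hle : ∀ s ∈ Ioo (-1 : ℝ) 1,
      (1 - b * s) ^ (-lam - 1) * (1 + s) * (1 - s ^ 2) ^ (lam - 1) ≤
        2 ^ (2 * lam + 2) *
          (betaKernel lam (1 - |b|) (1 - s) + betaKernel lam (1 - |b|) (1 + s)) :=
    fun s hs => integrand_le_betaKernel hlam.le hb (habs s hs)
  have hg := (intervalIntegrable_comp_one_sub_add_comp_one_add hk).const_mul (2 ^ (2 * lam + 2))
  have hf : IntervalIntegrable
      (fun s => (1 - b * s) ^ (-lam - 1) * (1 + s) * (1 - s ^ 2) ^ (lam - 1)) volume (-1) 1 :=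
    .of_nonneg_of_le_Ioo (by norm_num) (by fun_prop) hg
      (fun s hs => integrand_nonneg hb.le (habs s hs)) hle
  calc _ ≤ ∫ s in (-1 : ℝ)..1, 2 ^ (2 * lam + 2) *
          (betaKernel lam (1 - |b|) (1 - s) + betaKernel lam (1 - |b|) (1 + s)) :=
        integral_mono_on_of_le_Ioo (by norm_num) hf hg hle
    _ = 2 ^ (2 * lam + 2) * (2 * ∫ u in (0 : ℝ)..2, betaKernel lam (1 - |b|) u) := by
        rw [intervalIntegral.integral_const_mul, integral_comp_one_sub_add_comp_one_add hk]
    _ ≤ 2 ^ (2 * lam + 2) * (2 * (1 / (lam * (1 - |b|)))) := by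
        gcongr; exact integral_betaKernel_le hlam ht zero_le_two
    _ = 2 ^ (2 * lam + 3) / lam / (1 - |b|) := by
        rw [show 2 * lam + 3 = (2 * lam + 2) + 1 by ring, Real.rpow_add_one two_ne_zero]
        field_simp
end

section
/- For every λ > 0 there exists a constant C > 0 (depending only on λ) such that for all b with -1 < b < 1, ∫_{-1}^{1} (1 - b s)^{-λ-1} (1 - s) (1 - s^2)^{λ-1} ds ≤ C / (1 - |b|). -/
/-!
With `ε = 1 - |b|` and `u = 1 - |s|` one has `1 - b s ≥ (ε + u) / 2` and
`(1 - s) (1 - s²)^(λ-1) ≤ 2^(λ+1) u^(λ-1)`, so the integrand is at most a constant times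
`u^(λ-1) (ε + u)^(-λ-1)`. This kernel is `(λ ε)⁻¹` times the derivative of `(u / (ε + u))^λ`,
which lies in `[0, 1]`, so its integral is at most `2 / (λ ε)`.
-/

open Set MeasureTheory

lemma hasDerivAt_div_add_rpow {lam ε u : ℝ} (hε : 0 < ε) (hu : 0 < u) :
    HasDerivAt (fun v => (v / (ε + v)) ^ lam)
      (lam * ε * (u ^ (lam - 1) * (ε + u) ^ (-lam - 1))) u := by
  have hεu : 0 < ε + u := by linarith
  have hq : HasDerivAt (fun v => v / (ε + v)) (ε / (ε + u) ^ 2) u := by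
    have h := (hasDerivAt_id' u).div ((hasDerivAt_id' u).const_add ε) hεu.ne'
    rwa [one_mul, mul_one, add_sub_cancel_right] at h
  convert hq.rpow_const (p := lam) (Or.inl (div_pos hu hεu).ne') using 1
  rw [Real.div_rpow hu.le hεu.le, show -lam - 1 = -(lam - 1) - 2 by ring,
    Real.rpow_sub hεu, Real.rpow_neg hεu.le, Real.rpow_two]
  field_simp

lemma continuousOn_div_add_rpow {lam ε : ℝ} (hlam : 0 ≤ lam) (hε : 0 < ε) :
    ContinuousOn (fun u => (u / (ε + u)) ^ lam) (Ici 0) := by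
  refine ContinuousOn.rpow_const (continuousOn_id.div (continuousOn_const.add continuousOn_id)
    fun u hu => ?_) fun _ _ => Or.inr hlam
  have : (0 : ℝ) ≤ u := hu
  dsimp; positivity

lemma rpow_sub_one_le_two_rpow {lam y : ℝ} (hlam : 0 ≤ lam) (hy₁ : 1 ≤ y) (hy₂ : y ≤ 2) :
    y ^ (lam - 1) ≤ 2 ^ lam :=
  calc y ^ (lam - 1) = y ^ lam / y := Real.rpow_sub_one (by positivity) lam
    _ ≤ y ^ lam := div_le_self (by positivity) hy₁
    _ ≤ 2 ^ lam := Real.rpow_le_rpow (by positivity) hy₂ hlam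

lemma add_one_sub_abs_div_two_le {b t : ℝ} (hb : |b| ≤ 1) (ht : |t| ≤ 1) :
    (1 - |b| + (1 - |t|)) / 2 ≤ 1 - b * t := by
  have hbt : b * t ≤ |b| * |t| := (le_abs_self _).trans (abs_mul b t).le
  nlinarith [abs_nonneg b, abs_nonneg t]

lemma one_sub_mul_rpow_mul_one_sub_sq_rpow_le {lam b t : ℝ} (hlam : 0 ≤ lam) (hb : |b| ≤ 1)
    (ht : |t| < 1) :
    (1 - b * t) ^ (-lam - 1) * (1 - t) * (1 - t ^ 2) ^ (lam - 1)
      ≤ (2 ^ (lam + 1)) ^ 2 * ((1 - |t|) ^ (lam - 1) * (1 - |b| + (1 - |t|)) ^ (-lam - 1)) := by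
  have hu : 0 < 1 - |t| := by linarith
  have hε : 0 ≤ 1 - |b| := by linarith
  have hkernel : (1 - b * t) ^ (-lam - 1) ≤ 2 ^ (lam + 1) * (1 - |b| + (1 - |t|)) ^ (-lam - 1) :=
    calc (1 - b * t) ^ (-lam - 1) ≤ ((1 - |b| + (1 - |t|)) / 2) ^ (-lam - 1) :=
          Real.rpow_le_rpow_of_nonpos (by positivity) (add_one_sub_abs_div_two_le hb ht.le)
            (by linarith)
      _ = 2 ^ (lam + 1) * (1 - |b| + (1 - |t|)) ^ (-lam - 1) := by
          rw [Real.div_rpow (by positivity) zero_le_two, show -lam - 1 = -(lam + 1) by ring,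
            Real.rpow_neg zero_le_two, div_inv_eq_mul, mul_comm]
  have hweight : (1 - t) * (1 - t ^ 2) ^ (lam - 1) ≤ 2 ^ (lam + 1) * (1 - |t|) ^ (lam - 1) :=
    calc (1 - t) * (1 - t ^ 2) ^ (lam - 1)
        = (1 - t) * (1 + |t|) ^ (lam - 1) * (1 - |t|) ^ (lam - 1) := by
          rw [← sq_abs, show 1 - |t| ^ 2 = (1 + |t|) * (1 - |t|) by ring,
            Real.mul_rpow (by positivity) hu.le, mul_assoc]
      _ ≤ 2 * 2 ^ lam * (1 - |t|) ^ (lam - 1) := by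
          gcongr
          · linarith [neg_abs_le t]
          · exact rpow_sub_one_le_two_rpow hlam (by linarith [abs_nonneg t]) (by linarith)
      _ = 2 ^ (lam + 1) * (1 - |t|) ^ (lam - 1) := by
          rw [Real.rpow_add_one two_ne_zero]; ring
  calc (1 - b * t) ^ (-lam - 1) * (1 - t) * (1 - t ^ 2) ^ (lam - 1)
      = (1 - b * t) ^ (-lam - 1) * ((1 - t) * (1 - t ^ 2) ^ (lam - 1)) := mul_assoc _ _ _
    _ ≤ 2 ^ (lam + 1) * (1 - |b| + (1 - |t|)) ^ (-lam - 1) *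
        (2 ^ (lam + 1) * (1 - |t|) ^ (lam - 1)) :=
      mul_le_mul hkernel hweight
        (mul_nonneg (by linarith [le_abs_self t])
          (Real.rpow_nonneg (by nlinarith [sq_abs t, abs_nonneg t]) _))
        (by positivity)
    _ = _ := by ring

lemma apply_one_sub_abs_le_add {k : ℝ → ℝ} (hk : ∀ u, 0 ≤ u → 0 ≤ k u) {t : ℝ} (ht : |t| ≤ 1) :
    k (1 - |t|) ≤ k (1 + t) + k (1 - t) := by
  rcases abs_cases t with ⟨habs, -⟩ | ⟨habs, -⟩ <;> rw [habs]
  · exact le_add_of_nonneg_left (hk _ (by linarith [neg_abs_le t]))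
  · rw [sub_neg_eq_add]; exact le_add_of_nonneg_right (hk _ (by linarith [le_abs_self t]))

lemma integral_le_of_le_kernel {lam ε K : ℝ} {f : ℝ → ℝ} (hlam : 0 < lam) (hε : 0 < ε)
    (hK : 0 ≤ K)
    (hf : ∀ t ∈ Ioo (-1 : ℝ) 1,
      f t ≤ K * ((1 - |t|) ^ (lam - 1) * (ε + (1 - |t|)) ^ (-lam - 1))) :
    ∫ t in (-1 : ℝ)..1, f t ≤ 2 * K / (lam * ε) := by
  by_cases hint : IntervalIntegrable f volume (-1) 1
  swap
  · rw [intervalIntegral.integral_undef hint]; positivity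
  set k : ℝ → ℝ := fun u => u ^ (lam - 1) * (ε + u) ^ (-lam - 1)
  set φ : ℝ → ℝ := fun u => (u / (ε + u)) ^ lam
  have hk : ∀ u, 0 ≤ u → 0 ≤ k u := fun u hu => by positivity
  have hf' : ∀ t ∈ Ioo (-1 : ℝ) 1, f t ≤ K * (k (1 + t) + k (1 - t)) :=
    fun t ht => (hf t ht).trans (mul_le_mul_of_nonneg_left
      (apply_one_sub_abs_le_add hk (abs_lt.2 ht).le) hK)
  set G : ℝ → ℝ := fun t => K / (lam * ε) * (φ (1 + t) - φ (1 - t))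
  have hcont : ContinuousOn G (Icc (-1) 1) := by
    have hφ := continuousOn_div_add_rpow hlam.le hε
    refine continuousOn_const.mul ((hφ.comp (by fun_prop) ?_).sub (hφ.comp (by fun_prop) ?_))
    · intro t ht; simp only [mem_Ici]; linarith [ht.1]
    · intro t ht; simp only [mem_Ici]; linarith [ht.2]
  have hderiv : ∀ t ∈ Ioo (-1 : ℝ) 1, HasDerivAt G (K * (k (1 + t) + k (1 - t))) t := by
    intro t ht
    have h₁ := (hasDerivAt_div_add_rpow (lam := lam) hε (by linarith [ht.1] : 0 < 1 + t))
    have h₂ := (hasDerivAt_div_add_rpow (lam := lam) hε (by linarith [ht.2] : 0 < 1 - t))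
    refine (((h₁.comp_const_add 1 t).sub (h₂.comp_const_sub 1 t)).const_mul
      (K / (lam * ε))).congr_deriv ?_
    field_simp
    simp only [k, sub_neg_eq_add]
  have hφ0 : φ 0 = 0 := by simp [φ, Real.zero_rpow hlam.ne']
  have hφ2 : φ 2 ≤ 1 :=
    Real.rpow_le_one (by positivity) ((div_le_one (by positivity)).2 (by linarith)) hlam.le
  calc ∫ t in (-1 : ℝ)..1, f t
      ≤ G 1 - G (-1) :=
        intervalIntegral.integral_le_sub_of_hasDeriv_right_of_le (by norm_num) hcont
          (fun t ht => (hderiv t ht).hasDerivWithinAt)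
          ((intervalIntegrable_iff_integrableOn_Icc_of_le (by norm_num)).1 hint) hf'
    _ = 2 * K / (lam * ε) * φ 2 := by norm_num [G, hφ0]; ring
    _ ≤ 2 * K / (lam * ε) := mul_le_of_le_one_right (by positivity) hφ2

theorem paley_stmt2 (lam : ℝ) (hlam : 0 < lam) :
    ∃ C > (0 : ℝ), ∀ b : ℝ, -1 < b → b < 1 →
      ∫ s in (-1 : ℝ)..1, (1 - b * s) ^ (-lam - 1) * (1 - s) * (1 - s ^ 2) ^ (lam - 1)
        ≤ C / (1 - |b|) := by
  refine ⟨2 * (2 ^ (lam + 1)) ^ 2 / lam, by positivity, fun b hb₁ hb₂ => ?_⟩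
  have hb : |b| < 1 := abs_lt.2 ⟨hb₁, hb₂⟩
  calc ∫ s in (-1 : ℝ)..1, (1 - b * s) ^ (-lam - 1) * (1 - s) * (1 - s ^ 2) ^ (lam - 1)
      ≤ 2 * (2 ^ (lam + 1)) ^ 2 / (lam * (1 - |b|)) :=
        integral_le_of_le_kernel hlam (sub_pos.2 hb) (by positivity)
          fun s hs => one_sub_mul_rpow_mul_one_sub_sq_rpow_le hlam.le hb.le (abs_lt.2 hs)
    _ = 2 * (2 ^ (lam + 1)) ^ 2 / lam / (1 - |b|) := (div_div _ _ _).symm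
end

section
/- For every λ > 0 there exists a constant C > 0 (depending only on λ, one may take C ∼ 2/(2λ+1)) such that for all b with -1 < b < 1, ∫_{-1}^{1} (1 - b s)^{-λ-1} (1 - s^2)^{λ-1/2} ds ≤ C / (1 - |b|). -/
open MeasureTheory

theorem paley_stmt3 (lam : ℝ) (hlam : 0 < lam) :
    ∃ C > (0 : ℝ), ∀ b : ℝ, -1 < b → b < 1 →
      ∫ s in (-1 : ℝ)..1, (1 - b * s) ^ (-lam - 1) * (1 - s ^ 2) ^ (lam - 1 / 2)
        ≤ C / (1 - |b|) := by
  refine ⟨(2 : ℝ) ^ lam * 8, by positivity, fun b hb1 hb2 => ?_⟩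
  have hbabs : |b| < 1 := abs_lt.mpr ⟨hb1, hb2⟩
  set A : ℝ := 1 - |b| with hA
  have hA0 : 0 < A := by simp [hA]; linarith
  set f : ℝ → ℝ := fun s => (1 - b * s) ^ (-lam - 1) * (1 - s ^ 2) ^ (lam - 1 / 2) with hf
  set g : ℝ → ℝ := fun s =>
    2 ^ lam / A * ((1 - s) ^ (-(1 : ℝ) / 2) + (1 + s) ^ (-(1 : ℝ) / 2)) with hg
  -- integrability of the pieces of g
  have h1 : IntervalIntegrable (fun s : ℝ => (1 - s) ^ (-(1 : ℝ) / 2)) volume (-1) 1 := by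
    have := (intervalIntegral.intervalIntegrable_rpow' (a := 0) (b := 2)
      (r := -(1 : ℝ) / 2) (by norm_num)).comp_sub_left 1
    norm_num at this
    simpa [neg_div] using this.symm
  have h2 : IntervalIntegrable (fun s : ℝ => (1 + s) ^ (-(1 : ℝ) / 2)) volume (-1) 1 := by
    have := (intervalIntegral.intervalIntegrable_rpow' (a := 0) (b := 2)
      (r := -(1 : ℝ) / 2) (by norm_num)).comp_add_left 1
    norm_num at this
    simpa [neg_div] using this
  have hgi : IntervalIntegrable g volume (-1) 1 := ((h1.add h2).const_mul _)
  -- key pointwise bound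
  have key : ∀ s ∈ Set.Ioo (-1 : ℝ) 1, f s ≤ g s := by
    intro s hs
    obtain ⟨hs1, hs2⟩ := hs
    have hsabs : |s| < 1 := abs_lt.mpr ⟨hs1, hs2⟩
    have h1s : (0 : ℝ) < 1 - |s| := by linarith
    have hbs : b * s ≤ |s| := by
      calc b * s ≤ |b * s| := le_abs_self _
        _ = |b| * |s| := abs_mul _ _
        _ ≤ 1 * |s| := by apply mul_le_mul_of_nonneg_right hbabs.le (abs_nonneg s)
        _ = |s| := one_mul _
    have hbs' : A ≤ 1 - b * s := by
      have : b * s ≤ |b| * |s| := (le_abs_self _).trans (le_of_eq (abs_mul _ _))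
      have h2 : |b| * |s| ≤ |b| := by
        calc |b| * |s| ≤ |b| * 1 := mul_le_mul_of_nonneg_left hsabs.le (abs_nonneg b)
          _ = |b| := mul_one _
      simp only [hA]; linarith
    have hu : (0 : ℝ) < 1 - b * s := lt_of_lt_of_le hA0 hbs'
    -- step A
    have stepA : (1 - b * s) ^ (-lam - 1) ≤ A⁻¹ * (1 - |s|) ^ (-lam) := by
      have e : (1 - b * s) ^ (-lam - 1) = (1 - b * s) ^ (-(1 : ℝ)) * (1 - b * s) ^ (-lam) := by
        rw [← Real.rpow_add hu]; ring_nf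
      rw [e]
      have i1 : (1 - b * s) ^ (-(1 : ℝ)) ≤ A⁻¹ := by
        rw [Real.rpow_neg_one]
        exact inv_anti₀ hA0 hbs'
      have i2 : (1 - b * s) ^ (-lam) ≤ (1 - |s|) ^ (-lam) := by
        apply Real.rpow_le_rpow_of_nonpos h1s (by linarith) (by linarith)
      exact mul_le_mul i1 i2 (Real.rpow_nonneg hu.le _) (by positivity)
    -- step B : factor (1 - s^2)
    have stepB : (1 - s ^ 2) ^ (lam - 1 / 2)
        = (1 - |s|) ^ (lam - 1 / 2) * (1 + |s|) ^ (lam - 1 / 2) := by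
      rw [← Real.mul_rpow h1s.le (by positivity)]
      congr 1
      rw [← sq_abs s]; ring
    have h1splus : (0 : ℝ) < 1 + |s| := by positivity
    have stepC : (1 - |s|) ^ (-lam) * (1 - |s|) ^ (lam - 1 / 2)
        = (1 - |s|) ^ (-(1 : ℝ) / 2) := by
      rw [← Real.rpow_add h1s]; ring_nf
    have stepD : (1 + |s|) ^ (lam - 1 / 2) ≤ 2 ^ lam := by
      rcases le_or_gt (1 / 2 : ℝ) lam with h | h
      · calc (1 + |s|) ^ (lam - 1 / 2) ≤ 2 ^ (lam - 1 / 2) := by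
              apply Real.rpow_le_rpow (by positivity) (by linarith) (by linarith)
          _ ≤ 2 ^ lam := Real.rpow_le_rpow_of_exponent_le one_le_two (by linarith)
      · calc (1 + |s|) ^ (lam - 1 / 2) ≤ 1 :=
              Real.rpow_le_one_of_one_le_of_nonpos (by linarith [abs_nonneg s]) (by linarith)
          _ ≤ 2 ^ lam := Real.one_le_rpow one_le_two hlam.le
    have stepE : (1 - |s|) ^ (-(1 : ℝ) / 2)
        ≤ (1 - s) ^ (-(1 : ℝ) / 2) + (1 + s) ^ (-(1 : ℝ) / 2) := by
      rcases le_or_gt 0 s with h | h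
      · rw [abs_of_nonneg h]
        have : (0 : ℝ) ≤ (1 + s) ^ (-(1 : ℝ) / 2) := Real.rpow_nonneg (by linarith) _
        linarith
      · rw [abs_of_neg h]
        have : (0 : ℝ) ≤ (1 - s) ^ (-(1 : ℝ) / 2) := Real.rpow_nonneg (by linarith) _
        have e : 1 - -s = 1 + s := by ring
        rw [e]
        linarith
    calc f s ≤ (A⁻¹ * (1 - |s|) ^ (-lam)) * ((1 - |s|) ^ (lam - 1/2) * (1 + |s|) ^ (lam - 1/2)) := by
          rw [hf]
          simp only
          rw [stepB]
          exact mul_le_mul_of_nonneg_right stepA (by positivity)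
      _ = A⁻¹ * (1 - |s|) ^ (-(1:ℝ)/2) * (1 + |s|) ^ (lam - 1/2) := by
          rw [← stepC]; ring
      _ ≤ A⁻¹ * (1 - |s|) ^ (-(1:ℝ)/2) * 2 ^ lam := by
          apply mul_le_mul_of_nonneg_left stepD (by positivity)
      _ ≤ A⁻¹ * ((1 - s) ^ (-(1:ℝ)/2) + (1 + s) ^ (-(1:ℝ)/2)) * 2 ^ lam := by
          apply mul_le_mul_of_nonneg_right _ (by positivity)
          exact mul_le_mul_of_nonneg_left stepE (by positivity)
      _ = g s := by rw [hg]; simp only; ring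
  -- a.e. facts
  have hne1 : ∀ᵐ s : ℝ ∂volume, s ≠ -1 := by
    rw [ae_iff]
    have : {a : ℝ | ¬a ≠ -1} = {-1} := by ext x; simp
    rw [this]
    exact measure_singleton _
  have hne2 : ∀ᵐ s : ℝ ∂volume, s ≠ 1 := by
    rw [ae_iff]
    have : {a : ℝ | ¬a ≠ 1} = {1} := by ext x; simp
    rw [this]
    exact measure_singleton _
  have hfmeas : AEStronglyMeasurable f volume := by
    apply Measurable.aestronglyMeasurable
    rw [hf]; fun_prop
  -- integrability of f
  have hfi : IntervalIntegrable f volume (-1) 1 := by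
    rw [intervalIntegrable_iff_integrableOn_Ioc_of_le (by norm_num)]
    rw [integrableOn_Ioc_iff_integrableOn_Ioo]
    apply Integrable.mono (hgi.1.mono_set ?ss) hfmeas.restrict
    · filter_upwards [ae_restrict_mem measurableSet_Ioo] with s hs
      have hsa : |s| < 1 := abs_lt.mpr ⟨hs.1, hs.2⟩
      have h0 : 0 ≤ f s := by
        rw [hf]; simp only
        have hbs : b * s ≤ |b| * |s| := (le_abs_self _).trans_eq (abs_mul b s)
        have hu : (0:ℝ) ≤ 1 - b * s := by
          nlinarith [mul_pos (sub_pos.mpr hbabs) (sub_pos.mpr hsa), abs_nonneg b, abs_nonneg s]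
        have hv : (0:ℝ) ≤ 1 - s ^ 2 := by nlinarith [sq_abs s, abs_nonneg s]
        exact mul_nonneg (Real.rpow_nonneg hu _) (Real.rpow_nonneg hv _)
      have h0g : 0 ≤ g s := by
        rw [hg]; simp only
        refine mul_nonneg (div_nonneg (Real.rpow_nonneg (by norm_num) _) hA0.le) ?_
        exact add_nonneg (Real.rpow_nonneg (by linarith [hs.2]) _) (Real.rpow_nonneg (by linarith [hs.1]) _)
      rw [Real.norm_eq_abs, Real.norm_eq_abs, abs_of_nonneg h0, abs_of_nonneg h0g]
      exact key s hs
    case ss => exact Set.Ioo_subset_Ioc_self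
  -- compare integrals
  have hcomp : ∫ s in (-1:ℝ)..1, f s ≤ ∫ s in (-1:ℝ)..1, g s := by
    apply intervalIntegral.integral_mono_ae_restrict (by norm_num) hfi hgi
    filter_upwards [ae_restrict_mem measurableSet_Icc, ae_restrict_of_ae hne1,
      ae_restrict_of_ae hne2] with s hs h1' h2'
    exact key s ⟨lt_of_le_of_ne hs.1 (Ne.symm h1'), lt_of_le_of_ne hs.2 h2'⟩
  -- compute the g integral
  have hval : ∫ x in (0:ℝ)..2, x ^ (-((1:ℝ)/2)) = 2 * 2 ^ ((1:ℝ)/2) := by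
    rw [integral_rpow (Or.inl (by norm_num)),
      Real.zero_rpow (by norm_num : -((1:ℝ)/2) + 1 ≠ 0)]
    norm_num
    rw [show (2:ℝ) ^ ((1:ℝ)/2) = 2 ^ (2⁻¹:ℝ) by norm_num]
    ring
  have I1 : ∫ s in (-1:ℝ)..1, (1 - s) ^ (-(1:ℝ)/2) = 2 * 2 ^ ((1:ℝ)/2) := by
    have := intervalIntegral.integral_comp_sub_left (a := -1) (b := 1)
      (fun x : ℝ => x ^ (-(1:ℝ)/2)) 1
    norm_num at this
    rw [neg_div, this]
    exact hval
  have I2 : ∫ s in (-1:ℝ)..1, (1 + s) ^ (-(1:ℝ)/2) = 2 * 2 ^ ((1:ℝ)/2) := by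
    have := intervalIntegral.integral_comp_add_left (a := -1) (b := 1)
      (fun x : ℝ => x ^ (-(1:ℝ)/2)) 1
    norm_num at this
    rw [neg_div, this]
    exact hval
  have hgint : ∫ s in (-1:ℝ)..1, g s = 2^lam / A * (4 * 2 ^ ((1:ℝ)/2)) := by
    rw [hg]
    simp only
    rw [intervalIntegral.integral_const_mul, intervalIntegral.integral_add h1 h2, I1, I2]
    ring
  have h2half : (2:ℝ) ^ ((1:ℝ)/2) ≤ 2 := by
    calc (2:ℝ) ^ ((1:ℝ)/2) ≤ 2 ^ (1:ℝ) :=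
          Real.rpow_le_rpow_of_exponent_le one_le_two (by norm_num)
      _ = 2 := Real.rpow_one 2
  calc ∫ s in (-1:ℝ)..1, f s ≤ ∫ s in (-1:ℝ)..1, g s := hcomp
    _ = 2^lam / A * (4 * 2 ^ ((1:ℝ)/2)) := hgint
    _ ≤ 2^lam / A * 8 := by
        apply mul_le_mul_of_nonneg_left (by linarith) (by positivity)
    _ = 2^lam * 8 / A := by ring
end

section
/- Let λ > 0 and -1 < b ≤ 0. Then ∫_{-1}^{0} (1 - b s)^{-λ-1} (1 + s)^{λ} ds ≤ 1/(λ+1) - b ∫_{-1}^{0} (1 - b s)^{-1} ds, and hence this integral is bounded by a constant times 1/(1+b). -/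
/-! Integrating by parts against the antiderivative `(1 + s) ^ (λ + 1) / (λ + 1)` of
`(1 + s) ^ λ` leaves the boundary term `1 / (λ + 1)` and `-b` times the integral of
`(1 - b s) ^ (-λ - 2) (1 + s) ^ (λ + 1)`. Since `1 + s ≤ 1 - b s` on `[-1, 0]`, this integrand
is at most `(1 - b s)⁻¹`, and since `1 + b ≤ 1 - b s` there, that is at most `(1 + b)⁻¹`. -/

open MeasureTheory Set intervalIntegral

lemma one_add_le_one_sub_mul {b s : ℝ} (hb : -1 ≤ b) (hs : s ≤ 0) : 1 + s ≤ 1 - b * s := by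
  nlinarith

lemma one_sub_mul_pos {b s : ℝ} (hb : -1 < b) (hs : s ∈ Icc (-1 : ℝ) 0) : 0 < 1 - b * s := by
  obtain ⟨hs1, hs0⟩ := hs
  rcases le_or_gt b 0 with hb0 | hb0 <;> nlinarith

lemma continuousOn_one_sub_mul_rpow {b : ℝ} (hb : -1 < b) (p : ℝ) :
    ContinuousOn (fun s : ℝ => (1 - b * s) ^ p) (Icc (-1) 0) :=
  (continuousOn_const.sub (continuousOn_const.mul continuousOn_id)).rpow_const
    fun _ hs => Or.inl (one_sub_mul_pos hb hs).ne'

lemma continuous_one_add_rpow {p : ℝ} (hp : 0 ≤ p) : Continuous fun s : ℝ => (1 + s) ^ p :=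
  (continuous_const.add continuous_id).rpow_const fun _ => Or.inr hp

theorem integral_one_sub_mul_rpow_mul_one_add_rpow_eq {lam b : ℝ} (hlam : 0 ≤ lam)
    (hb : -1 < b) :
    ∫ s in (-1 : ℝ)..0, (1 - b * s) ^ (-lam - 1) * (1 + s) ^ lam
      = 1 / (lam + 1)
        - b * ∫ s in (-1 : ℝ)..0, (1 - b * s) ^ (-lam - 2) * (1 + s) ^ (lam + 1) := by
  have hIcc : uIcc (-1 : ℝ) 0 = Icc (-1) 0 := uIcc_of_le (by norm_num)
  have hu : ∀ s ∈ uIcc (-1 : ℝ) 0, HasDerivAt (fun s => (1 - b * s) ^ (-lam - 1))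
      (b * (lam + 1) * (1 - b * s) ^ (-lam - 2)) s := by
    intro s hs
    rw [hIcc] at hs
    refine (((hasDerivAt_id' s).const_mul b).const_sub 1 |>.rpow_const
      (p := -lam - 1) (Or.inl (one_sub_mul_pos hb hs).ne')).congr_deriv ?_
    rw [show -lam - 1 - 1 = -lam - 2 by ring]
    ring
  have hv : ∀ s ∈ uIcc (-1 : ℝ) 0, HasDerivAt (fun s => (1 + s) ^ (lam + 1) / (lam + 1))
      ((1 + s) ^ lam) s := by
    intro s _
    refine (((hasDerivAt_id' s).const_add 1).rpow_const (p := lam + 1) (Or.inr (by linarith))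
      |>.div_const (lam + 1)).congr_deriv ?_
    rw [add_sub_cancel_right]
    field_simp
  have hu' : IntervalIntegrable (fun s => b * (lam + 1) * (1 - b * s) ^ (-lam - 2))
      volume (-1) 0 :=
    (continuousOn_const.mul (continuousOn_one_sub_mul_rpow hb _)).intervalIntegrable_of_Icc
      (by norm_num)
  have hv' : IntervalIntegrable (fun s : ℝ => (1 + s) ^ lam) volume (-1) 0 :=
    (continuous_one_add_rpow hlam).intervalIntegrable _ _
  have hlam1 : lam + 1 ≠ 0 := by linarith
  have hintegrand : ∀ s : ℝ,
      b * (lam + 1) * (1 - b * s) ^ (-lam - 2) * ((1 + s) ^ (lam + 1) / (lam + 1))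
        = b * ((1 - b * s) ^ (-lam - 2) * (1 + s) ^ (lam + 1)) := fun s => by
    field_simp
  rw [integral_mul_deriv_eq_deriv_mul hu hv hu' hv']
  simp only [hintegrand, intervalIntegral.integral_const_mul]
  norm_num [Real.zero_rpow hlam1]

theorem integral_one_sub_mul_rpow_mul_one_add_rpow_le {lam b : ℝ} (hlam : -1 ≤ lam)
    (hb : -1 < b) :
    ∫ s in (-1 : ℝ)..0, (1 - b * s) ^ (-lam - 2) * (1 + s) ^ (lam + 1)
      ≤ ∫ s in (-1 : ℝ)..0, (1 - b * s) ^ (-1 : ℝ) := by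
  have hlam1 : 0 ≤ lam + 1 := by linarith
  refine integral_mono_on (by norm_num) ?_ ?_ fun s hs => ?_
  · exact ((continuousOn_one_sub_mul_rpow hb _).mul
      (continuous_one_add_rpow hlam1).continuousOn).intervalIntegrable_of_Icc (by norm_num)
  · exact (continuousOn_one_sub_mul_rpow hb _).intervalIntegrable_of_Icc (by norm_num)
  have hpos := one_sub_mul_pos hb hs
  calc (1 - b * s) ^ (-lam - 2) * (1 + s) ^ (lam + 1)
      ≤ (1 - b * s) ^ (-lam - 2) * (1 - b * s) ^ (lam + 1) := by
        gcongr
        · linarith [hs.1]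
        · exact one_add_le_one_sub_mul hb.le hs.2
    _ = (1 - b * s) ^ (-1 : ℝ) := by
        rw [← Real.rpow_add hpos]
        ring_nf

theorem integral_one_sub_mul_rpow_mul_one_add_rpow_le_one_div_sub {lam b : ℝ} (hlam : 0 ≤ lam)
    (hb : -1 < b) (hb0 : b ≤ 0) :
    ∫ s in (-1 : ℝ)..0, (1 - b * s) ^ (-lam - 1) * (1 + s) ^ lam
      ≤ 1 / (lam + 1) - b * ∫ s in (-1 : ℝ)..0, (1 - b * s) ^ (-1 : ℝ) := by
  rw [integral_one_sub_mul_rpow_mul_one_add_rpow_eq hlam hb]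
  have := integral_one_sub_mul_rpow_mul_one_add_rpow_le (by linarith : -1 ≤ lam) hb
  nlinarith

lemma integral_one_sub_mul_inv_nonneg {b : ℝ} (hb : -1 < b) :
    0 ≤ ∫ s in (-1 : ℝ)..0, (1 - b * s) ^ (-1 : ℝ) :=
  integral_nonneg (by norm_num) fun s hs => (Real.rpow_pos_of_pos (one_sub_mul_pos hb hs) _).le

lemma integral_one_sub_mul_inv_le {b : ℝ} (hb : -1 < b) (hb0 : b ≤ 0) :
    ∫ s in (-1 : ℝ)..0, (1 - b * s) ^ (-1 : ℝ) ≤ (1 + b)⁻¹ := by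
  refine (integral_mono_on (g := fun _ => (1 + b)⁻¹) (by norm_num)
    ((continuousOn_one_sub_mul_rpow hb _).intervalIntegrable_of_Icc (by norm_num))
    intervalIntegrable_const fun s hs => ?_).trans_eq (by simp)
  rw [Real.rpow_neg_one]
  -- `1 + b ≤ 1 - b * s` is `one_add_le_one_sub_mul` with the roles of `b` and `s` exchanged
  exact inv_anti₀ (by linarith) (by simpa [mul_comm] using one_add_le_one_sub_mul hs.1 hb0)

theorem paley_stmt4 (lam : ℝ) (hlam : 0 < lam) :
    (∀ b : ℝ, -1 < b → b ≤ 0 →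
      ∫ s in (-1 : ℝ)..0, (1 - b * s) ^ (-lam - 1) * (1 + s) ^ lam
        ≤ 1 / (lam + 1) - b * ∫ s in (-1 : ℝ)..0, (1 - b * s) ^ (-1 : ℝ)) ∧
    ∃ C > (0 : ℝ), ∀ b : ℝ, -1 < b → b ≤ 0 →
      ∫ s in (-1 : ℝ)..0, (1 - b * s) ^ (-lam - 1) * (1 + s) ^ lam ≤ C / (1 + b) := by
  have hbound := fun b hb hb0 =>
    integral_one_sub_mul_rpow_mul_one_add_rpow_le_one_div_sub (lam := lam) (b := b) hlam.le hb hb0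
  refine ⟨hbound, 1 / (lam + 1) + 1, by positivity, fun b hb hb0 => ?_⟩
  have hb1 : 0 < 1 + b := by linarith
  have hI0 := integral_one_sub_mul_inv_nonneg hb
  have hI := integral_one_sub_mul_inv_le hb hb0
  have hA : 0 ≤ 1 / (lam + 1) := by positivity
  calc _ ≤ 1 / (lam + 1) - b * ∫ s in (-1 : ℝ)..0, (1 - b * s) ^ (-1 : ℝ) := hbound b hb hb0
    _ ≤ 1 / (lam + 1) / (1 + b) + (1 + b)⁻¹ := by
        rw [sub_eq_add_neg]
        gcongr ?_ + ?_
        · exact le_div_self hA hb1 (by linarith)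
        · nlinarith
    _ = (1 / (lam + 1) + 1) / (1 + b) := by ring
end

section
/- Let λ > 0 and 0 ≤ b < 1. Then ∫_{0}^{1} (1 - b s)^{-λ-1} (1 - s)^{λ-1} ds ≤ C (1/λ + ((λ+1)/λ) b ∫_{0}^{1} (1 - b s)^{-2} ds) for an absolute constant C, and hence this integral is ≲ 1/(1 - b) with implied constant depending only on λ. -/
/-!
The kernel integral can be computed exactly: for `b < 1` the integrand
`(1 - b s) ^ (-λ - 1) (1 - s) ^ (λ - 1)` is `-1 / (λ (1 - b))` times the derivative of
`(1 - s) ^ λ (1 - b s) ^ (-λ)`, so the integral equals `1 / (λ (1 - b))`. The case `λ = 1` gives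
`∫ (1 - b s) ^ (-2) = 1 / (1 - b)`, and both bounds reduce to elementary inequalities.
-/

open MeasureTheory Set

lemma one_sub_mul_pos_of_mem_Icc {b s : ℝ} (hb : b < 1) (hs : s ∈ Icc (0 : ℝ) 1) :
    0 < 1 - b * s := by
  rcases le_total 0 b with hb0 | hb0 <;> nlinarith [hs.1, hs.2]

lemma hasDerivAt_one_sub_rpow_mul_one_sub_mul_rpow_neg {lam b x : ℝ} (hx : x < 1)
    (hbx : 0 < 1 - b * x) :
    HasDerivAt (fun s => (1 - s) ^ lam * (1 - b * s) ^ (-lam))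
      (-(lam * (1 - b)) * ((1 - b * x) ^ (-lam - 1) * (1 - x) ^ (lam - 1))) x := by
  have hu : 0 < 1 - x := by linarith
  have d1 := ((hasDerivAt_id' x).const_sub 1).rpow_const (p := lam) (Or.inl hu.ne')
  have d2 := (((hasDerivAt_id' x).const_mul b).const_sub 1).rpow_const (p := -lam)
    (Or.inl hbx.ne')
  refine (d1.mul d2).congr_deriv ?_
  have e1 : (1 - x) ^ lam = (1 - x) ^ (lam - 1) * (1 - x) := by
    rw [← Real.rpow_add_one hu.ne', sub_add_cancel]
  have e2 : (1 - b * x) ^ (-lam) = (1 - b * x) ^ (-lam - 1) * (1 - b * x) := by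
    rw [← Real.rpow_add_one hbx.ne', sub_add_cancel]
  rw [e1, e2]
  ring

theorem integral_one_sub_mul_rpow_mul_one_sub_rpow {lam b : ℝ} (hlam : 0 < lam) (hb : b < 1) :
    ∫ s in (0 : ℝ)..1, (1 - b * s) ^ (-lam - 1) * (1 - s) ^ (lam - 1) = 1 / (lam * (1 - b)) := by
  have h1b : 1 - b ≠ 0 := by linarith
  set F : ℝ → ℝ := fun s => (1 - s) ^ lam * (1 - b * s) ^ (-lam) / -(lam * (1 - b))
  have hcont : ContinuousOn F (Icc 0 1) := by
    refine ContinuousOn.div_const (ContinuousOn.mul ?_ ?_) _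
    · exact (continuousOn_const.sub continuousOn_id).rpow_const fun _ _ => Or.inr hlam.le
    · exact (continuousOn_const.sub (continuousOn_const.mul continuousOn_id)).rpow_const
        fun _ hs => Or.inl (one_sub_mul_pos_of_mem_Icc hb hs).ne'
  have hderiv : ∀ x ∈ Ioo (0 : ℝ) 1,
      HasDerivAt F ((1 - b * x) ^ (-lam - 1) * (1 - x) ^ (lam - 1)) x := by
    intro x hx
    refine ((hasDerivAt_one_sub_rpow_mul_one_sub_mul_rpow_neg hx.2
      (one_sub_mul_pos_of_mem_Icc hb (Ioo_subset_Icc_self hx))).div_const _).congr_deriv ?_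
    field_simp
  have hnonneg : ∀ x ∈ Ioo (0 : ℝ) 1, 0 ≤ (1 - b * x) ^ (-lam - 1) * (1 - x) ^ (lam - 1) :=
    fun x hx => mul_nonneg
      (Real.rpow_nonneg (one_sub_mul_pos_of_mem_Icc hb (Ioo_subset_Icc_self hx)).le _)
      (Real.rpow_nonneg (by linarith [hx.2]) _)
  have hint := (intervalIntegrable_iff_integrableOn_Ioc_of_le zero_le_one).2
    (intervalIntegral.integrableOn_deriv_of_nonneg hcont hderiv hnonneg)
  rw [intervalIntegral.integral_eq_sub_of_hasDerivAt_of_le zero_le_one hcont hderiv hint]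
  simp [F, Real.zero_rpow hlam.ne']

lemma integral_one_sub_mul_rpow_neg_two {b : ℝ} (hb : b < 1) :
    ∫ s in (0 : ℝ)..1, (1 - b * s) ^ (-2 : ℝ) = 1 / (1 - b) := by
  simpa [Real.rpow_zero, show (-1 - 1 : ℝ) = -2 by norm_num] using
    integral_one_sub_mul_rpow_mul_one_sub_rpow one_pos hb

theorem paley_stmt5 :
    (∃ C > (0 : ℝ), ∀ lam : ℝ, 0 < lam → ∀ b : ℝ, 0 ≤ b → b < 1 →
      ∫ s in (0 : ℝ)..1, (1 - b * s) ^ (-lam - 1) * (1 - s) ^ (lam - 1)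
        ≤ C * (1 / lam + ((lam + 1) / lam) * b *
            ∫ s in (0 : ℝ)..1, (1 - b * s) ^ (-2 : ℝ))) ∧
    ∀ lam : ℝ, 0 < lam → ∃ C > (0 : ℝ), ∀ b : ℝ, 0 ≤ b → b < 1 →
      ∫ s in (0 : ℝ)..1, (1 - b * s) ^ (-lam - 1) * (1 - s) ^ (lam - 1)
        ≤ C / (1 - b) := by
  refine ⟨⟨1, one_pos, fun lam hlam b hb0 hb1 => ?_⟩, fun lam hlam => ⟨1 / lam, by positivity,
    fun b _ hb1 => ?_⟩⟩
  · have h1b : 0 < 1 - b := by linarith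
    have hrhs :
        1 / lam + (lam + 1) / lam * b * (1 / (1 - b)) = (1 + lam * b) / (lam * (1 - b)) := by
      field_simp
      ring
    rw [integral_one_sub_mul_rpow_mul_one_sub_rpow hlam hb1, integral_one_sub_mul_rpow_neg_two hb1,
      one_mul, hrhs]
    gcongr
    nlinarith
  · rw [integral_one_sub_mul_rpow_mul_one_sub_rpow hlam hb1, div_div]
end

section
/- Let λ > 0, x, x_0 ∈ ℝ with x x_0 ≠ 0 and |x| ≠ |x_0|. Then ∫_{-1}^{1} (1+s)(1-s^2)^{λ-1} (x^2 + x_0^2 - 2 x x_0 s)^{-λ-1} ds ≤ C (x^2 + x_0^2)^{-λ} (|x| - |x_0|)^{-2}, where C depends only on λ. -/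
open MeasureTheory

lemma paley_decomp (lam s : ℝ) (hlam : 0 < lam) (hs : s ∈ Set.Icc (-1 : ℝ) 1) :
    (1 + s) * (1 - s ^ 2) ^ (lam - 1) = (1 + s) ^ lam * (1 - s) ^ (lam - 1) := by
  rcases eq_or_lt_of_le hs.1 with h | h
  · rw [← h]
    norm_num
    rw [Real.zero_rpow hlam.ne']
    simp
  · have h1 : 0 < 1 + s := by linarith
    have h2 : 0 ≤ 1 - s := by linarith [hs.2]
    have e : 1 - s ^ 2 = (1 + s) * (1 - s) := by ring
    rw [e, Real.mul_rpow h1.le h2,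
      show lam = lam - 1 + 1 by ring, Real.rpow_add_one h1.ne']
    ring

lemma paley_wbound (lam t : ℝ) (hlam : 0 < lam) (h1 : 1 ≤ t) (h2 : t ≤ 2) :
    t ^ (lam - 1) ≤ 2 ^ lam := by
  have ht : (0 : ℝ) < t := lt_of_lt_of_le one_pos h1
  calc t ^ (lam - 1) = t ^ lam / t := by
        rw [Real.rpow_sub ht, Real.rpow_one]
    _ ≤ t ^ lam := div_le_self (Real.rpow_nonneg ht.le _) h1
    _ ≤ 2 ^ lam := Real.rpow_le_rpow ht.le h2 hlam.le

lemma paley_int_one_sub (lam : ℝ) (hlam : 0 < lam) (a : ℝ) :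
    ∫ s in a..(1 : ℝ), (1 - s) ^ (lam - 1) = (1 - a) ^ lam / lam := by
  rw [intervalIntegral.integral_comp_sub_left (fun u => u ^ (lam - 1)) 1]
  rw [integral_rpow (Or.inl (by linarith))]
  rw [show lam - 1 + 1 = lam by ring]
  norm_num
  rw [Real.zero_rpow hlam.ne']
  ring

lemma paley_intable_one_sub (lam : ℝ) (hlam : 0 < lam) (a b : ℝ) :
    IntervalIntegrable (fun s => (1 - s) ^ (lam - 1)) volume a b := by
  have h := (intervalIntegral.intervalIntegrable_rpow'
    (show (-1 : ℝ) < lam - 1 by linarith) (a := 1 - a) (b := 1 - b)).comp_sub_left 1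
  simpa using h

lemma paley_int_inv_sq (a m : ℝ) (hm : m < 1) (ham : a ≤ m) :
    ∫ s in a..m, (1 - s) ^ (-2 : ℝ) = (1 - m)⁻¹ - (1 - a)⁻¹ := by
  rw [intervalIntegral.integral_comp_sub_left (fun u => u ^ (-2 : ℝ)) 1]
  rw [integral_rpow (Or.inr ⟨by norm_num, by
    rw [Set.mem_uIcc]
    push_neg
    constructor <;> intro h <;> nlinarith⟩)]
  norm_num
  rw [Real.rpow_neg_one, Real.rpow_neg_one]
  ring

lemma paley_intable_inv_sq (a m : ℝ) (hm : m < 1) (ham : a ≤ m) :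
    IntervalIntegrable (fun s => (1 - s) ^ (-2 : ℝ)) volume a m := by
  apply ContinuousOn.intervalIntegrable
  apply ContinuousOn.rpow_const
  · exact (continuous_const.sub continuous_id).continuousOn
  · intro x hx
    rw [Set.uIcc_of_le ham] at hx
    exact Or.inl (by have := hx.2; dsimp; nlinarith)

set_option maxHeartbeats 2000000 in
lemma paley_core (lam A B : ℝ) (hlam : 0 < lam) (hBA : |B| < A) :
    ∫ s in (-1 : ℝ)..1, (1 + s) * (1 - s ^ 2) ^ (lam - 1) * (A - B * s) ^ (-lam - 1)
      ≤ (2 ^ (3 * lam + 2) * (1 + 1 / lam)) * A ^ (-lam) * (A - |B|)⁻¹ := by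
  have hA : 0 < A := (abs_nonneg B).trans_lt hBA
  have hc : 0 < A - |B| := by linarith
  set f : ℝ → ℝ := fun s => (1 + s) * (1 - s ^ 2) ^ (lam - 1) * (A - B * s) ^ (-lam - 1)
    with hf_def
  by_cases hInt : IntervalIntegrable f volume (-1) 1
  swap
  · rw [intervalIntegral.integral_undef hInt]
    positivity
  have hD : ∀ s ∈ Set.Icc (-1 : ℝ) 1, A - |B| ≤ A - B * s := by
    intro s hs
    have h1 : 0 ≤ |B| - B := by linarith [le_abs_self B]
    have h2 : 0 ≤ |B| + B := by linarith [neg_abs_le B]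
    nlinarith [mul_nonneg h1 (by linarith [hs.1] : (0:ℝ) ≤ 1 + s),
      mul_nonneg h2 (by linarith [hs.2] : (0:ℝ) ≤ 1 - s)]
  have hApow : A ^ (-lam - 1) = A ^ (-lam) * A⁻¹ := by
    rw [show -lam - 1 = -lam + -1 by ring, Real.rpow_add hA, Real.rpow_neg_one]
  have hAc : A⁻¹ ≤ (A - |B|)⁻¹ := by
    apply inv_anti₀ hc
    linarith [abs_nonneg B]
  have hhalf : (A / 2) ^ (-lam - 1) = A ^ (-lam) * A⁻¹ * 2 ^ (lam + 1) := by
    rw [Real.div_rpow hA.le (by norm_num : (0:ℝ) ≤ 2), div_eq_mul_inv,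
      ← Real.rpow_neg (by norm_num : (0:ℝ) ≤ 2), ← hApow]
    congr 1
    ring
  have hT1 : (0:ℝ) ≤ 2 ^ (3 * lam + 2) * A ^ (-lam) * (A - |B|)⁻¹ := by positivity
  have hT2 : (0:ℝ) ≤ 2 ^ (3 * lam + 2) / lam * A ^ (-lam) * (A - |B|)⁻¹ := by positivity
  have hRHS : (2 : ℝ) ^ (3 * lam + 2) * (1 + 1 / lam) * A ^ (-lam) * (A - |B|)⁻¹
      = 2 ^ (3 * lam + 2) * A ^ (-lam) * (A - |B|)⁻¹
        + 2 ^ (3 * lam + 2) / lam * A ^ (-lam) * (A - |B|)⁻¹ := by ring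
  rcases le_or_gt |B| (A / 2) with hb | hb
  · -- Case (i) : |B| ≤ A/2
    have hpt : ∀ s ∈ Set.Icc (-1:ℝ) 1,
        f s ≤ 2 ^ lam * (A / 2) ^ (-lam - 1) * (1 - s) ^ (lam - 1) := by
      intro s hs
      have h1s : (0:ℝ) ≤ 1 + s := by linarith [hs.1]
      have h2s : (0:ℝ) ≤ 1 - s := by linarith [hs.2]
      have e1 : (1 + s) ^ lam ≤ (2:ℝ) ^ lam :=
        Real.rpow_le_rpow h1s (by linarith [hs.2]) hlam.le
      have e2 : (A - B * s) ^ (-lam - 1) ≤ (A / 2) ^ (-lam - 1) :=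
        Real.rpow_le_rpow_of_nonpos (by linarith) (by linarith [hD s hs]) (by linarith)
      have hDpos : (0:ℝ) ≤ A - B * s := by linarith [hD s hs]
      simp only [hf_def]
      rw [paley_decomp lam s hlam hs]
      calc (1 + s) ^ lam * (1 - s) ^ (lam - 1) * (A - B * s) ^ (-lam - 1)
          ≤ 2 ^ lam * (1 - s) ^ (lam - 1) * (A / 2) ^ (-lam - 1) :=
            mul_le_mul (mul_le_mul_of_nonneg_right e1 (Real.rpow_nonneg h2s _)) e2
              (Real.rpow_nonneg hDpos _) (by positivity)
        _ = 2 ^ lam * (A / 2) ^ (-lam - 1) * (1 - s) ^ (lam - 1) := by ring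
    calc ∫ s in (-1:ℝ)..1, f s
        ≤ ∫ s in (-1:ℝ)..1, 2 ^ lam * (A / 2) ^ (-lam - 1) * (1 - s) ^ (lam - 1) :=
          intervalIntegral.integral_mono_on (by norm_num) hInt
            (((paley_intable_one_sub lam hlam _ _).const_mul _)) hpt
      _ = 2 ^ lam * (A / 2) ^ (-lam - 1) * ((1 - (-1:ℝ)) ^ lam / lam) := by
          rw [intervalIntegral.integral_const_mul, paley_int_one_sub lam hlam]
      _ ≤ 2 ^ (3 * lam + 2) * A ^ (-lam) * (A - |B|)⁻¹
            + 2 ^ (3 * lam + 2) / lam * A ^ (-lam) * (A - |B|)⁻¹ := by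
          have h2' : (1 - (-1:ℝ)) = 2 := by norm_num
          rw [h2', hhalf]
          have hp : (2:ℝ) ^ lam * 2 ^ (lam + 1) * 2 ^ lam = 2 ^ (3 * lam + 1) := by
            rw [← Real.rpow_add two_pos, ← Real.rpow_add two_pos]
            congr 1
            ring
          have key : (2:ℝ) ^ lam * (A ^ (-lam) * A⁻¹ * 2 ^ (lam + 1)) * (2 ^ lam / lam)
              = 2 ^ (3 * lam + 1) / lam * A ^ (-lam) * A⁻¹ := by
            rw [← hp]; ring
          rw [key]
          have hpow : (2:ℝ) ^ (3 * lam + 1) ≤ 2 ^ (3 * lam + 2) :=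
            Real.rpow_le_rpow_of_exponent_le one_le_two (by linarith)
          have : (2:ℝ) ^ (3 * lam + 1) / lam * A ^ (-lam) * A⁻¹
              ≤ 2 ^ (3 * lam + 2) / lam * A ^ (-lam) * (A - |B|)⁻¹ := by
            gcongr
          linarith
      _ = 2 ^ (3 * lam + 2) * (1 + 1 / lam) * A ^ (-lam) * (A - |B|)⁻¹ := hRHS.symm
  · -- |B| > A/2
    rcases le_or_gt B 0 with hBneg | hBpos
    · -- B ≤ 0, split at 0
      have hsub1 : Set.uIcc (-1:ℝ) 0 ⊆ Set.uIcc (-1:ℝ) 1 := by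
        rw [Set.uIcc_of_le (by norm_num : (-1:ℝ) ≤ 0), Set.uIcc_of_le (by norm_num : (-1:ℝ) ≤ 1)]
        exact Set.Icc_subset_Icc le_rfl (by norm_num)
      have hsub2 : Set.uIcc (0:ℝ) 1 ⊆ Set.uIcc (-1:ℝ) 1 := by
        rw [Set.uIcc_of_le (by norm_num : (0:ℝ) ≤ 1), Set.uIcc_of_le (by norm_num : (-1:ℝ) ≤ 1)]
        exact Set.Icc_subset_Icc (by norm_num) le_rfl
      have hsplit : ∫ s in (-1:ℝ)..1, f s = (∫ s in (-1:ℝ)..0, f s) + ∫ s in (0:ℝ)..1, f s :=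
        (intervalIntegral.integral_add_adjacent_intervals (hInt.mono_set hsub1)
          (hInt.mono_set hsub2)).symm
      -- piece 1 pointwise
      have hpt1 : ∀ s ∈ Set.Icc (-1:ℝ) 0,
          f s ≤ 2 ^ lam * ((2 / A) ^ lam * (A - |B|)⁻¹) := by
        intro s hs
        have hs' : s ∈ Set.Icc (-1:ℝ) 1 := ⟨hs.1, by linarith [hs.2]⟩
        have h1s : (0:ℝ) ≤ 1 + s := by linarith [hs.1]
        have hDpos : (0:ℝ) < A - B * s := lt_of_lt_of_le hc (hD s hs')
        have w : (1 - s) ^ (lam - 1) ≤ (2:ℝ) ^ lam :=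
          paley_wbound lam (1 - s) hlam (by linarith [hs.2]) (by linarith [hs.1])
        have habs : |B| = -B := abs_of_nonpos hBneg
        have hD2 : A / 2 * (1 + s) ≤ A - B * s := by
          nlinarith [hs.1, hs.2, mul_nonneg (by linarith : (0:ℝ) ≤ -B - A/2) h1s]
        have e1 : (1 + s) ^ lam ≤ (2 / A * (A - B * s)) ^ lam := by
          apply Real.rpow_le_rpow h1s _ hlam.le
          rw [div_mul_eq_mul_div, le_div_iff₀ hA]
          nlinarith
        have e1' : (2 / A * (A - B * s)) ^ lam = (2 / A) ^ lam * (A - B * s) ^ lam :=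
          Real.mul_rpow (by positivity) hDpos.le
        have eD : (A - B * s) ^ (-lam - 1) = (A - B * s) ^ (-lam) * (A - B * s)⁻¹ := by
          rw [show -lam - 1 = -lam + -1 by ring, Real.rpow_add hDpos, Real.rpow_neg_one]
        have key : (1 + s) ^ lam * (A - B * s) ^ (-lam - 1) ≤ (2 / A) ^ lam * (A - |B|)⁻¹ := by
          rw [eD]
          calc (1 + s) ^ lam * ((A - B * s) ^ (-lam) * (A - B * s)⁻¹)
              ≤ (2 / A) ^ lam * (A - B * s) ^ lam * ((A - B * s) ^ (-lam) * (A - B * s)⁻¹) :=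
                mul_le_mul_of_nonneg_right (e1.trans_eq e1')
                  (mul_nonneg (Real.rpow_nonneg hDpos.le _) (by positivity))
            _ = (2 / A) ^ lam * ((A - B * s) ^ lam * (A - B * s) ^ (-lam)) * (A - B * s)⁻¹ := by
                ring
            _ = (2 / A) ^ lam * (A - B * s)⁻¹ := by
                rw [← Real.rpow_add hDpos]
                norm_num
            _ ≤ (2 / A) ^ lam * (A - |B|)⁻¹ :=
                mul_le_mul_of_nonneg_left (inv_anti₀ hc (hD s hs')) (by positivity)
        simp only [hf_def]
        rw [paley_decomp lam s hlam hs']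
        calc (1 + s) ^ lam * (1 - s) ^ (lam - 1) * (A - B * s) ^ (-lam - 1)
            = (1 - s) ^ (lam - 1) * ((1 + s) ^ lam * (A - B * s) ^ (-lam - 1)) := by ring
          _ ≤ 2 ^ lam * ((2 / A) ^ lam * (A - |B|)⁻¹) :=
              mul_le_mul w key
                (mul_nonneg (Real.rpow_nonneg h1s _) (Real.rpow_nonneg hDpos.le _))
                (by positivity)
      have hI1 : ∫ s in (-1:ℝ)..0, f s ≤ 2 ^ lam * ((2 / A) ^ lam * (A - |B|)⁻¹) := by
        calc ∫ s in (-1:ℝ)..0, f s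
            ≤ ∫ _s in (-1:ℝ)..0, 2 ^ lam * ((2 / A) ^ lam * (A - |B|)⁻¹) :=
              intervalIntegral.integral_mono_on (by norm_num) (hInt.mono_set hsub1)
                intervalIntegrable_const hpt1
          _ = 2 ^ lam * ((2 / A) ^ lam * (A - |B|)⁻¹) := by simp
      -- piece 2 pointwise
      have hpt2 : ∀ s ∈ Set.Icc (0:ℝ) 1,
          f s ≤ 2 ^ lam * A ^ (-lam - 1) * (1 - s) ^ (lam - 1) := by
        intro s hs
        have hs' : s ∈ Set.Icc (-1:ℝ) 1 := ⟨by linarith [hs.1], hs.2⟩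
        have h1s : (0:ℝ) ≤ 1 + s := by linarith [hs.1]
        have h2s : (0:ℝ) ≤ 1 - s := by linarith [hs.2]
        have hDpos : (0:ℝ) ≤ A - B * s := by linarith [hD s hs', hc]
        have e1 : (1 + s) ^ lam ≤ (2:ℝ) ^ lam :=
          Real.rpow_le_rpow h1s (by linarith [hs.2]) hlam.le
        have e2 : (A - B * s) ^ (-lam - 1) ≤ A ^ (-lam - 1) := by
          apply Real.rpow_le_rpow_of_nonpos hA _ (by linarith)
          nlinarith [mul_nonpos_of_nonpos_of_nonneg hBneg hs.1]
        simp only [hf_def]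
        rw [paley_decomp lam s hlam hs']
        calc (1 + s) ^ lam * (1 - s) ^ (lam - 1) * (A - B * s) ^ (-lam - 1)
            ≤ 2 ^ lam * (1 - s) ^ (lam - 1) * A ^ (-lam - 1) :=
              mul_le_mul (mul_le_mul_of_nonneg_right e1 (Real.rpow_nonneg h2s _)) e2
                (Real.rpow_nonneg hDpos _) (by positivity)
          _ = 2 ^ lam * A ^ (-lam - 1) * (1 - s) ^ (lam - 1) := by ring
      have hI2 : ∫ s in (0:ℝ)..1, f s ≤ 2 ^ lam * A ^ (-lam - 1) * (1 / lam) := by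
        calc ∫ s in (0:ℝ)..1, f s
            ≤ ∫ s in (0:ℝ)..1, 2 ^ lam * A ^ (-lam - 1) * (1 - s) ^ (lam - 1) :=
              intervalIntegral.integral_mono_on (by norm_num) (hInt.mono_set hsub2)
                ((paley_intable_one_sub lam hlam _ _).const_mul _) hpt2
          _ = 2 ^ lam * A ^ (-lam - 1) * ((1 - 0) ^ lam / lam) := by
              rw [intervalIntegral.integral_const_mul, paley_int_one_sub lam hlam]
          _ = 2 ^ lam * A ^ (-lam - 1) * (1 / lam) := by
              norm_num [Real.one_rpow]
      -- combine
      have c1 : 2 ^ lam * ((2 / A) ^ lam * (A - |B|)⁻¹)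
          ≤ 2 ^ (3 * lam + 2) * A ^ (-lam) * (A - |B|)⁻¹ := by
        have hd : ((2:ℝ) / A) ^ lam = 2 ^ lam * A ^ (-lam) := by
          rw [Real.div_rpow (by norm_num : (0:ℝ) ≤ 2) hA.le, Real.rpow_neg hA.le,
            div_eq_mul_inv]
        have h21 : (2:ℝ) ^ lam * 2 ^ lam = 2 ^ (lam + lam) := (Real.rpow_add two_pos _ _).symm
        have h22 : (2:ℝ) ^ (lam + lam) ≤ 2 ^ (3 * lam + 2) :=
          Real.rpow_le_rpow_of_exponent_le one_le_two (by linarith)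
        calc 2 ^ lam * ((2 / A) ^ lam * (A - |B|)⁻¹)
            = (2 ^ lam * 2 ^ lam) * A ^ (-lam) * (A - |B|)⁻¹ := by rw [hd]; ring
          _ ≤ 2 ^ (3 * lam + 2) * A ^ (-lam) * (A - |B|)⁻¹ := by
              rw [h21]
              gcongr
      have c2 : 2 ^ lam * A ^ (-lam - 1) * (1 / lam)
          ≤ 2 ^ (3 * lam + 2) / lam * A ^ (-lam) * (A - |B|)⁻¹ := by
        have h22 : (2:ℝ) ^ lam ≤ 2 ^ (3 * lam + 2) :=
          Real.rpow_le_rpow_of_exponent_le one_le_two (by linarith)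
        calc 2 ^ lam * A ^ (-lam - 1) * (1 / lam)
            = 2 ^ lam / lam * A ^ (-lam) * A⁻¹ := by rw [hApow]; ring
          _ ≤ 2 ^ (3 * lam + 2) / lam * A ^ (-lam) * (A - |B|)⁻¹ := by
              gcongr
      rw [hsplit, hRHS]
      linarith
    · -- B > 0
      have habs : |B| = B := abs_of_pos hBpos
      have hBc : (0:ℝ) < A - B := by rw [← habs]; exact hc
      have hbB : A / 2 < B := by rw [habs] at hb; exact hb
      obtain ⟨m, hm_def⟩ : ∃ m : ℝ, m = 1 - (A - B) / B := ⟨_, rfl⟩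
      have hq : 0 < (A - B) / B := div_pos hBc hBpos
      have hm1 : m < 1 := by rw [hm_def]; linarith
      have hm0 : 0 < m := by
        rw [hm_def, sub_pos, div_lt_one hBpos]
        linarith
      have hm_1 : (-1:ℝ) ≤ m := by linarith
      have h1m : 1 - m = (A - B) / B := by rw [hm_def]; ring
      have hsub1 : Set.uIcc (-1:ℝ) m ⊆ Set.uIcc (-1:ℝ) 1 := by
        rw [Set.uIcc_of_le hm_1, Set.uIcc_of_le (by norm_num : (-1:ℝ) ≤ 1)]
        exact Set.Icc_subset_Icc le_rfl hm1.le
      have hsub2 : Set.uIcc m 1 ⊆ Set.uIcc (-1:ℝ) 1 := by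
        rw [Set.uIcc_of_le hm1.le, Set.uIcc_of_le (by norm_num : (-1:ℝ) ≤ 1)]
        exact Set.Icc_subset_Icc hm_1 le_rfl
      have hsplit : ∫ s in (-1:ℝ)..1, f s = (∫ s in (-1:ℝ)..m, f s) + ∫ s in m..1, f s :=
        (intervalIntegral.integral_add_adjacent_intervals (hInt.mono_set hsub1)
          (hInt.mono_set hsub2)).symm
      -- piece 1 pointwise
      have hpt1 : ∀ s ∈ Set.Icc (-1:ℝ) m,
          f s ≤ 2 ^ lam * (A / 2) ^ (-lam - 1) * (1 - s) ^ (-2:ℝ) := by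
        intro s hs
        have hs' : s ∈ Set.Icc (-1:ℝ) 1 := ⟨hs.1, hs.2.trans hm1.le⟩
        have h1s : (0:ℝ) ≤ 1 + s := by linarith [hs.1]
        have h2s : (0:ℝ) < 1 - s := by linarith [hs.2, hm1]
        have hDpos : (0:ℝ) < A - B * s := lt_of_lt_of_le hc (hD s hs')
        have e1 : (1 + s) ^ lam ≤ (2:ℝ) ^ lam :=
          Real.rpow_le_rpow h1s (by linarith [hs'.2]) hlam.le
        have hD2 : A / 2 * (1 - s) ≤ A - B * s := by
          nlinarith [mul_nonneg (by linarith : (0:ℝ) ≤ B - A/2) h2s.le]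
        have e2 : (A - B * s) ^ (-lam - 1) ≤ (A / 2 * (1 - s)) ^ (-lam - 1) :=
          Real.rpow_le_rpow_of_nonpos (by positivity) hD2 (by linarith)
        have e2' : (A / 2 * (1 - s)) ^ (-lam - 1) = (A / 2) ^ (-lam - 1) * (1 - s) ^ (-lam - 1) :=
          Real.mul_rpow (by positivity) h2s.le
        simp only [hf_def]
        rw [paley_decomp lam s hlam hs']
        calc (1 + s) ^ lam * (1 - s) ^ (lam - 1) * (A - B * s) ^ (-lam - 1)
            ≤ 2 ^ lam * (1 - s) ^ (lam - 1) * ((A / 2) ^ (-lam - 1) * (1 - s) ^ (-lam - 1)) :=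
              mul_le_mul (mul_le_mul_of_nonneg_right e1 (Real.rpow_nonneg h2s.le _))
                (e2.trans_eq e2') (Real.rpow_nonneg hDpos.le _) (by positivity)
          _ = 2 ^ lam * (A / 2) ^ (-lam - 1) * ((1 - s) ^ (lam - 1) * (1 - s) ^ (-lam - 1)) := by
              ring
          _ = 2 ^ lam * (A / 2) ^ (-lam - 1) * (1 - s) ^ (-2:ℝ) := by
              rw [← Real.rpow_add h2s, show lam - 1 + (-lam - 1) = (-2:ℝ) by ring]
      have hI1 : ∫ s in (-1:ℝ)..m, f s
          ≤ 2 ^ lam * (A / 2) ^ (-lam - 1) * (B / (A - B)) := by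
        calc ∫ s in (-1:ℝ)..m, f s
            ≤ ∫ s in (-1:ℝ)..m, 2 ^ lam * (A / 2) ^ (-lam - 1) * (1 - s) ^ (-2:ℝ) :=
              intervalIntegral.integral_mono_on hm_1 (hInt.mono_set hsub1)
                ((paley_intable_inv_sq (-1) m hm1 hm_1).const_mul _) hpt1
          _ = 2 ^ lam * (A / 2) ^ (-lam - 1) * ((1 - m)⁻¹ - (1 - (-1:ℝ))⁻¹) := by
              rw [intervalIntegral.integral_const_mul, paley_int_inv_sq (-1) m hm1 hm_1]
          _ ≤ 2 ^ lam * (A / 2) ^ (-lam - 1) * (B / (A - B)) := by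
              apply mul_le_mul_of_nonneg_left _ (by positivity)
              rw [h1m, inv_div]
              have : (0:ℝ) < (1 - (-1:ℝ))⁻¹ := by norm_num
              linarith
      -- piece 2 pointwise
      have hpt2 : ∀ s ∈ Set.Icc m 1,
          f s ≤ 2 ^ lam * (A - |B|) ^ (-lam - 1) * (1 - s) ^ (lam - 1) := by
        intro s hs
        have hs' : s ∈ Set.Icc (-1:ℝ) 1 := ⟨le_trans hm_1 hs.1, hs.2⟩
        have h1s : (0:ℝ) ≤ 1 + s := by linarith [hs'.1]
        have h2s : (0:ℝ) ≤ 1 - s := by linarith [hs.2]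
        have hDpos : (0:ℝ) ≤ A - B * s := by linarith [hD s hs', hc]
        have e1 : (1 + s) ^ lam ≤ (2:ℝ) ^ lam :=
          Real.rpow_le_rpow h1s (by linarith [hs.2]) hlam.le
        have e2 : (A - B * s) ^ (-lam - 1) ≤ (A - |B|) ^ (-lam - 1) :=
          Real.rpow_le_rpow_of_nonpos hc (hD s hs') (by linarith)
        simp only [hf_def]
        rw [paley_decomp lam s hlam hs']
        calc (1 + s) ^ lam * (1 - s) ^ (lam - 1) * (A - B * s) ^ (-lam - 1)
            ≤ 2 ^ lam * (1 - s) ^ (lam - 1) * (A - |B|) ^ (-lam - 1) :=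
              mul_le_mul (mul_le_mul_of_nonneg_right e1 (Real.rpow_nonneg h2s _)) e2
                (Real.rpow_nonneg hDpos _) (by positivity)
          _ = 2 ^ lam * (A - |B|) ^ (-lam - 1) * (1 - s) ^ (lam - 1) := by ring
      have hI2 : ∫ s in m..1, f s
          ≤ 2 ^ lam * (A - |B|) ^ (-lam - 1) * ((1 - m) ^ lam / lam) := by
        calc ∫ s in m..1, f s
            ≤ ∫ s in m..1, 2 ^ lam * (A - |B|) ^ (-lam - 1) * (1 - s) ^ (lam - 1) :=
              intervalIntegral.integral_mono_on hm1.le (hInt.mono_set hsub2)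
                ((paley_intable_one_sub lam hlam _ _).const_mul _) hpt2
          _ = 2 ^ lam * (A - |B|) ^ (-lam - 1) * ((1 - m) ^ lam / lam) := by
              rw [intervalIntegral.integral_const_mul, paley_int_one_sub lam hlam]
      -- combine : piece 1
      have c1 : 2 ^ lam * (A / 2) ^ (-lam - 1) * (B / (A - B))
          ≤ 2 ^ (3 * lam + 2) * A ^ (-lam) * (A - |B|)⁻¹ := by
        rw [habs]
        have h21 : (2:ℝ) ^ lam * 2 ^ (lam + 1) = 2 ^ (lam + (lam + 1)) :=
          (Real.rpow_add two_pos _ _).symm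
        have h22 : (2:ℝ) ^ (lam + (lam + 1)) ≤ 2 ^ (3 * lam + 2) :=
          Real.rpow_le_rpow_of_exponent_le one_le_two (by linarith)
        have hBA1 : B / A ≤ 1 := (div_le_one hA).mpr (by linarith [le_abs_self B])
        calc 2 ^ lam * (A / 2) ^ (-lam - 1) * (B / (A - B))
            = (2 ^ lam * 2 ^ (lam + 1)) * A ^ (-lam) * (B / A) * (A - B)⁻¹ := by
              rw [hhalf]; ring
          _ ≤ 2 ^ (3 * lam + 2) * A ^ (-lam) * 1 * (A - B)⁻¹ := by
              rw [h21]
              gcongr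
          _ = 2 ^ (3 * lam + 2) * A ^ (-lam) * (A - B)⁻¹ := by ring
      -- combine : piece 2
      have c2 : 2 ^ lam * (A - |B|) ^ (-lam - 1) * ((1 - m) ^ lam / lam)
          ≤ 2 ^ (3 * lam + 2) / lam * A ^ (-lam) * (A - |B|)⁻¹ := by
        rw [habs, h1m]
        have eq1 : ((A - B) / B) ^ lam = (A - B) ^ lam * (B ^ lam)⁻¹ := by
          rw [Real.div_rpow hBc.le hBpos.le, div_eq_mul_inv]
        have eq2 : (A - B) ^ (-lam - 1) * (A - B) ^ lam = (A - B)⁻¹ := by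
          rw [← Real.rpow_add hBc, show -lam - 1 + lam = (-1:ℝ) by ring, Real.rpow_neg_one]
        have hBpow : (B ^ lam)⁻¹ ≤ 2 ^ lam * A ^ (-lam) := by
          have hup : A ^ lam / 2 ^ lam ≤ B ^ lam := by
            rw [← Real.div_rpow hA.le (by norm_num : (0:ℝ) ≤ 2)]
            exact Real.rpow_le_rpow (by positivity) (by linarith) hlam.le
          have h0 : (0:ℝ) < A ^ lam / 2 ^ lam := by positivity
          calc (B ^ lam)⁻¹ ≤ (A ^ lam / 2 ^ lam)⁻¹ := inv_anti₀ h0 hup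
            _ = 2 ^ lam * A ^ (-lam) := by
                rw [Real.rpow_neg hA.le, inv_div, div_eq_mul_inv]
        have h22 : (2:ℝ) ^ lam * (2 ^ lam * A ^ (-lam))
            ≤ 2 ^ (3 * lam + 2) * A ^ (-lam) := by
          have : (2:ℝ) ^ lam * 2 ^ lam = 2 ^ (lam + lam) := (Real.rpow_add two_pos _ _).symm
          rw [← mul_assoc, this]
          exact mul_le_mul_of_nonneg_right
            (Real.rpow_le_rpow_of_exponent_le one_le_two (by linarith))
            (Real.rpow_nonneg hA.le _)
        calc 2 ^ lam * (A - B) ^ (-lam - 1) * (((A - B) / B) ^ lam / lam)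
            = ((A - B) ^ (-lam - 1) * (A - B) ^ lam) * (2 ^ lam * (B ^ lam)⁻¹ / lam) := by
              rw [eq1]; ring
          _ = (A - B)⁻¹ * (2 ^ lam * (B ^ lam)⁻¹ / lam) := by rw [eq2]
          _ ≤ (A - B)⁻¹ * (2 ^ lam * (2 ^ lam * A ^ (-lam)) / lam) := by
              apply mul_le_mul_of_nonneg_left _ (by positivity)
              apply div_le_div_of_nonneg_right ?_ hlam.le
              exact mul_le_mul_of_nonneg_left hBpow (by positivity)
          _ ≤ (A - B)⁻¹ * (2 ^ (3 * lam + 2) * A ^ (-lam) / lam) := by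
              apply mul_le_mul_of_nonneg_left _ (by positivity)
              exact div_le_div_of_nonneg_right h22 hlam.le
          _ = 2 ^ (3 * lam + 2) / lam * A ^ (-lam) * (A - B)⁻¹ := by ring
      rw [hsplit, hRHS]
      have := hI1.trans c1
      have := hI2.trans c2
      linarith

theorem paley_stmt10 (lam : ℝ) (hlam : 0 < lam) :
    ∃ C > (0 : ℝ), ∀ x x₀ : ℝ, x * x₀ ≠ 0 → |x| ≠ |x₀| →
      ∫ s in (-1 : ℝ)..1,
          (1 + s) * (1 - s ^ 2) ^ (lam - 1) *
            (x ^ 2 + x₀ ^ 2 - 2 * x * x₀ * s) ^ (-lam - 1)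
        ≤ C * (x ^ 2 + x₀ ^ 2) ^ (-lam) * ((|x| - |x₀|) ^ 2)⁻¹ := by
  refine ⟨2 ^ (3 * lam + 2) * (1 + 1 / lam), by positivity, ?_⟩
  intro x x₀ hx hne
  have habs : |2 * x * x₀| = 2 * (|x| * |x₀|) := by
    rw [abs_mul, abs_mul, abs_two]
    ring
  have hsq : x ^ 2 + x₀ ^ 2 - |2 * x * x₀| = (|x| - |x₀|) ^ 2 := by
    rw [habs]
    have h1 := sq_abs x
    have h2 := sq_abs x₀
    nlinarith
  have hBA : |2 * x * x₀| < x ^ 2 + x₀ ^ 2 := by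
    have hpos : (0:ℝ) < (|x| - |x₀|) ^ 2 := by
      have : |x| - |x₀| ≠ 0 := sub_ne_zero.mpr hne
      positivity
    linarith [hsq]
  have key := paley_core lam (x ^ 2 + x₀ ^ 2) (2 * x * x₀) hlam hBA
  rw [hsq] at key
  exact key
end
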